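/- arXiv:2510.07607 — 3 statements merged into one kernel-verified Lean document; each statement's English description precedes it below -/
import Mathlib

section
/- Let k be a perfect field of characteristic p > 0 and let R = k[x,y,z]/(xy - z^p). Then the R-module Der_k(R) is free of rank 2, generated by the derivations d1 = x∂x - y∂y and d2 = ∂z. -/
open MvPolynomial

/-- The coordinate ring R = k[x,y,z]/(xy - z^p) of Lipman's example. -/
abbrev LipmanRing (k : Type*) [CommRing k] (p : ℕ) : Type _ :=
  MvPolynomial (Fin 3) k ⧸
    Ideal.span {(X 0 * X 1 - X 2 ^ p : MvPolynomial (Fin 3) k)}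

section LiftDer
variable {k A : Type*} [CommRing k] [CommRing A] [Algebra k A] (I : Ideal A)

noncomputable def liftDerL (δ : Derivation k A (A ⧸ I)) (h : ∀ a ∈ I, δ a = 0) :
    (A ⧸ I) →ₗ[k] (A ⧸ I) :=
  (Submodule.liftQ (I.restrictScalars k) δ.toLinearMap
      (fun a ha => LinearMap.mem_ker.mpr (h a ha))) ∘ₗ
    (Submodule.Quotient.restrictScalarsEquiv k I).symm.toLinearMap

theorem liftDerL_mk (δ : Derivation k A (A ⧸ I)) (h : ∀ a ∈ I, δ a = 0) (a : A) :
    liftDerL I δ h (Ideal.Quotient.mk I a) = δ a := by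
  have h2 : (Submodule.Quotient.restrictScalarsEquiv k I).symm (Ideal.Quotient.mk I a) =
      Submodule.Quotient.mk a := by
    apply (Submodule.Quotient.restrictScalarsEquiv k I).injective
    rw [LinearEquiv.apply_symm_apply, Submodule.Quotient.restrictScalarsEquiv_mk]
    rfl
  simp only [liftDerL, LinearMap.coe_comp, Function.comp_apply, LinearEquiv.coe_coe]
  rw [h2, Submodule.liftQ_apply]
  rfl

/-- Lift a derivation `A → A/I` vanishing on `I` to a derivation on `A/I`. -/
noncomputable def liftDer (δ : Derivation k A (A ⧸ I)) (h : ∀ a ∈ I, δ a = 0) :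
    Derivation k (A ⧸ I) (A ⧸ I) where
  toLinearMap := liftDerL I δ h
  map_one_eq_zero' := by
    have h1 : (1 : A ⧸ I) = Ideal.Quotient.mk I 1 := rfl
    rw [h1, liftDerL_mk, Derivation.map_one_eq_zero]
  leibniz' := by
    intro a b
    obtain ⟨a, rfl⟩ := Ideal.Quotient.mk_surjective a
    obtain ⟨b, rfl⟩ := Ideal.Quotient.mk_surjective b
    have key : ∀ (u : A) (w : A ⧸ I), u • w = Ideal.Quotient.mk I u * w := by
      intro u w
      obtain ⟨w, rfl⟩ := Ideal.Quotient.mk_surjective w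
      rfl
    rw [← map_mul, liftDerL_mk, liftDerL_mk, liftDerL_mk, Derivation.leibniz, key, key,
      smul_eq_mul, smul_eq_mul]

theorem liftDer_mk (δ : Derivation k A (A ⧸ I)) (h : ∀ a ∈ I, δ a = 0) (a : A) :
    liftDer I δ h (Ideal.Quotient.mk I a) = δ a :=
  liftDerL_mk I δ h a

theorem der_span_vanish {f : A} (δ : Derivation k A (A ⧸ Ideal.span {f})) (hf : δ f = 0) :
    ∀ a ∈ Ideal.span {f}, δ a = 0 := by
  intro a ha
  obtain ⟨c, rfl⟩ := Ideal.mem_span_singleton.mp ha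
  rw [Derivation.leibniz, hf, smul_zero, add_zero]
  have h1 : (f : A) • δ c = Ideal.Quotient.mk (Ideal.span {f}) f * δ c := by
    obtain ⟨w, hw⟩ := Ideal.Quotient.mk_surjective (I := Ideal.span {f}) (δ c)
    rw [← hw]
    rfl
  have h2 : Ideal.Quotient.mk (Ideal.span {f}) f = 0 :=
    Ideal.Quotient.eq_zero_iff_mem.mpr (Ideal.subset_span rfl)
  rw [h1, h2, zero_mul]

end LiftDer

section Primes
variable {k : Type*} [Field k]

theorem mv_prime_X {n : ℕ} (i : Fin (n + 1)) : Prime (X i : MvPolynomial (Fin (n + 1)) k) := by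
  let e : MvPolynomial (Fin (n + 1)) k ≃+* Polynomial (MvPolynomial (Fin n) k) :=
    ((renameEquiv k (Equiv.swap i 0)).trans (finSuccEquiv k n)).toRingEquiv
  rw [← MulEquiv.prime_iff e.toMulEquiv]
  have : e.toMulEquiv (X i) = Polynomial.X := by
    show ((finSuccEquiv k n) ((renameEquiv k (Equiv.swap i 0)) (X i))) = Polynomial.X
    simp [Equiv.swap_apply_left, finSuccEquiv_X_zero]
  rw [this]
  exact Polynomial.prime_X

theorem mv_not_dvd_X {n : ℕ} {i j : Fin n} (hij : i ≠ j) :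
    ¬ (X i : MvPolynomial (Fin n) k) ∣ X j := by
  intro ⟨c, hc⟩
  have := congrArg (eval (fun t => if t = i then (0 : k) else 1)) hc
  simp [hij.symm] at this

variable {p : ℕ}

theorem prime_fpoly : Prime (X 0 * X 1 - X 2 ^ p : MvPolynomial (Fin 3) k) := by
  rw [← MulEquiv.prime_iff (finSuccEquiv k 2).toRingEquiv.toMulEquiv]
  have himg : (finSuccEquiv k 2).toRingEquiv.toMulEquiv (X 0 * X 1 - X 2 ^ p) =
      Polynomial.C (X 0) * Polynomial.X + Polynomial.C (-(X 1 ^ p)) := by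
    show (finSuccEquiv k 2) (X 0 * X 1 - X 2 ^ p) = _
    have h1 : (1 : Fin 3) = (0 : Fin 2).succ := rfl
    have h2 : (2 : Fin 3) = (1 : Fin 2).succ := rfl
    rw [map_sub, map_mul, map_pow, finSuccEquiv_X_zero, h1, h2, finSuccEquiv_X_succ,
      finSuccEquiv_X_succ, ← Polynomial.C_pow, map_neg]
    ring
  rw [himg]
  set a : MvPolynomial (Fin 2) k := X 0 with ha
  set b : MvPolynomial (Fin 2) k := -(X 1 ^ p) with hb
  set F : Polynomial (MvPolynomial (Fin 2) k) := Polynomial.C a * Polynomial.X + Polynomial.C b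
    with hF
  have hcoeff1 : F.coeff 1 = a := by simp [hF]
  have hcoeff0 : F.coeff 0 = b := by simp [hF]
  have hprim : F.IsPrimitive := by
    intro r hr
    have hdvd : ∀ n, r ∣ F.coeff n := by
      obtain ⟨g, hg⟩ := hr
      intro n
      rw [hg, Polynomial.coeff_C_mul]
      exact Dvd.intro _ rfl
    have hra : r ∣ a := hcoeff1 ▸ hdvd 1
    have hrb : r ∣ b := hcoeff0 ▸ hdvd 0
    obtain ⟨s, hs⟩ := hra
    rcases (mv_prime_X (0 : Fin 2)).irreducible.isUnit_or_isUnit hs with h | h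
    · exact h
    · exfalso
      have hxr : a ∣ r := by
        obtain ⟨u, hu⟩ := h.exists_right_inv
        exact ⟨u, by rw [hs, mul_assoc, hu, mul_one]⟩
      have : (X 0 : MvPolynomial (Fin 2) k) ∣ X 1 ^ p := by
        rw [ha] at hxr
        have := hxr.trans hrb
        rwa [dvd_neg] at this
      exact mv_not_dvd_X (by decide : (0 : Fin 2) ≠ 1)
        ((mv_prime_X (0 : Fin 2)).dvd_of_dvd_pow this)
  apply UniqueFactorizationMonoid.irreducible_iff_prime.mp
  apply hprim.irreducible_of_irreducible_map_of_injective
    (IsFractionRing.injective (MvPolynomial (Fin 2) k) (FractionRing (MvPolynomial (Fin 2) k)))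
  have hane : a ≠ 0 := by simpa [ha] using X_ne_zero (R := k) (0 : Fin 2)
  have : F.map (algebraMap (MvPolynomial (Fin 2) k) (FractionRing (MvPolynomial (Fin 2) k))) =
      Polynomial.C (algebraMap _ _ a) * Polynomial.X + Polynomial.C (algebraMap _ _ b) := by
    simp [hF]
  rw [this]
  apply Polynomial.irreducible_of_degree_eq_one
  apply Polynomial.degree_linear
  simpa using hane

end Primes

section Psi
variable {k : Type*} [CommRing k]

/-- The substitution X0 ↦ 0. -/
noncomputable def psi0 : MvPolynomial (Fin 3) k →ₐ[k] MvPolynomial (Fin 3) k :=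
  aeval ![0, X 1, X 2]

theorem psi0_X0 : psi0 (X 0 : MvPolynomial (Fin 3) k) = 0 := by simp [psi0]
theorem psi0_X1 : psi0 (X 1 : MvPolynomial (Fin 3) k) = X 1 := by simp [psi0]
theorem psi0_X2 : psi0 (X 2 : MvPolynomial (Fin 3) k) = X 2 := by simp [psi0]

theorem X0_dvd_sub_psi0 (g : MvPolynomial (Fin 3) k) :
    (X 0 : MvPolynomial (Fin 3) k) ∣ g - psi0 g := by
  induction g using MvPolynomial.induction_on with
  | C c => simp [psi0, dvd_refl]
  | add g1 g2 h1 h2 =>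
    have : g1 + g2 - psi0 (g1 + g2) = (g1 - psi0 g1) + (g2 - psi0 g2) := by
      rw [map_add]; ring
    rw [this]; exact dvd_add h1 h2
  | mul_X g i hg =>
    have : g * X i - psi0 (g * X i) = (g - psi0 g) * X i + psi0 g * (X i - psi0 (X i)) := by
      rw [map_mul]; ring
    rw [this]
    refine dvd_add (Dvd.dvd.mul_right hg _) ?_
    refine Dvd.dvd.mul_left ?_ _
    fin_cases i <;> simp [psi0]

end Psi

set_option maxHeartbeats 1000000 in
set_option synthInstance.maxHeartbeats 1000000 in
/-- Let k be a perfect field of characteristic p > 0 and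
R = k[x,y,z]/(xy - z^p).  Then Der_k(R) is a free R-module of rank 2, with basis the
derivations d₁ = x∂x - y∂y (i.e. d₁x = x, d₁y = -y, d₁z = 0) and d₂ = ∂z
(i.e. d₂x = 0, d₂y = 0, d₂z = 1). -/
theorem stmt_0 (k : Type*) [Field k] [PerfectField k] (p : ℕ) (hp : 0 < p) [CharP k p] :
    letI R := LipmanRing k p
    letI x : R := Ideal.Quotient.mk _ (X 0)
    letI y : R := Ideal.Quotient.mk _ (X 1)
    letI z : R := Ideal.Quotient.mk _ (X 2)
    ∃ b : Module.Basis (Fin 2) R (Derivation k R R),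
      b 0 x = x ∧ b 0 y = -y ∧ b 0 z = 0 ∧
      b 1 x = 0 ∧ b 1 y = 0 ∧ b 1 z = 1 := by
  set f : MvPolynomial (Fin 3) k := X 0 * X 1 - X 2 ^ p with hf
  set I : Ideal (MvPolynomial (Fin 3) k) := Ideal.span {f} with hI
  set R := LipmanRing k p with hR
  set π : MvPolynomial (Fin 3) k →+* R := Ideal.Quotient.mk I with hπ
  set x : R := π (X 0) with hx
  set y : R := π (X 1) with hy
  set z : R := π (X 2) with hz
  have hfprime : Prime f := prime_fpoly
  haveI hIP : I.IsPrime := (Ideal.span_singleton_prime hfprime.ne_zero).mpr hfprime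
  haveI : IsDomain R := Ideal.Quotient.isDomain I
  have hπf : π f = 0 := by
    rw [hπ, Ideal.Quotient.eq_zero_iff_mem]
    exact Ideal.subset_span rfl
  -- x ≠ 0 in R
  have hx0 : x ≠ 0 := by
    rw [hx, hπ, Ne, Ideal.Quotient.eq_zero_iff_mem, hI, Ideal.mem_span_singleton]
    rintro ⟨c, hc⟩
    rcases (mv_prime_X (0 : Fin 3)).irreducible.isUnit_or_isUnit hc with h | h
    · exact hfprime.not_unit h
    · obtain ⟨u, hu⟩ := h.exists_right_inv
      have hfd : f ∣ (X 0 : MvPolynomial (Fin 3) k) * X 1 := ⟨c * X 1, by rw [hc]; ring⟩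
      have hdvdf : (X 0 : MvPolynomial (Fin 3) k) ∣ f := ⟨u, by rw [hc, mul_assoc, hu, mul_one]⟩
      have : (X 0 : MvPolynomial (Fin 3) k) ∣ X 2 ^ p := by
        have : (X 2 : MvPolynomial (Fin 3) k) ^ p = X 0 * X 1 - f := by rw [hf]; ring
        rw [this]
        exact dvd_sub (Dvd.intro _ rfl) hdvdf
      exact mv_not_dvd_X (by decide : (0 : Fin 3) ≠ 2)
        ((mv_prime_X (0 : Fin 3)).dvd_of_dvd_pow this)
  -- xy = z^p
  have hxyz : x * y = z ^ p := by
    rw [hx, hy, hz, ← map_mul, ← map_pow, ← sub_eq_zero, ← map_sub]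
    exact hπf
  -- (p : R) = 0
  have hpR : (p : R) = 0 := by
    have : ((p : ℕ) : R) = algebraMap k R ((p : ℕ) : k) := by
      rw [map_natCast]
    rw [this, CharP.cast_eq_zero, map_zero]
  -- the two derivations
  have hsmul : ∀ (u : MvPolynomial (Fin 3) k) (w : R), u • w = π u * w := by
    intro u w
    obtain ⟨w', hw'⟩ := Ideal.Quotient.mk_surjective (I := I) w
    rw [← hw']
    rfl
  set δ1 : Derivation k (MvPolynomial (Fin 3) k) R := mkDerivation k ![x, -y, 0] with hδ1
  set δ2 : Derivation k (MvPolynomial (Fin 3) k) R := mkDerivation k ![0, 0, 1] with hδ2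
  have hδ1X0 : δ1 (X 0) = x := by rw [hδ1, mkDerivation_X]; rfl
  have hδ1X1 : δ1 (X 1) = -y := by rw [hδ1, mkDerivation_X]; rfl
  have hδ1X2 : δ1 (X 2) = 0 := by rw [hδ1, mkDerivation_X]; rfl
  have hδ2X0 : δ2 (X 0) = 0 := by rw [hδ2, mkDerivation_X]; rfl
  have hδ2X1 : δ2 (X 1) = 0 := by rw [hδ2, mkDerivation_X]; rfl
  have hδ2X2 : δ2 (X 2) = 1 := by rw [hδ2, mkDerivation_X]; rfl
  have hδ1f : δ1 f = 0 := by
    rw [hf, map_sub, Derivation.leibniz, Derivation.leibniz_pow, hδ1X0, hδ1X1, hδ1X2,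
      smul_zero, smul_zero, hsmul, hsmul]
    ring
  have hδ2f : δ2 f = 0 := by
    rw [hf, map_sub, Derivation.leibniz, Derivation.leibniz_pow, hδ2X0, hδ2X1, hδ2X2,
      smul_zero, smul_zero, hsmul]
    rw [zero_add, zero_sub, nsmul_eq_mul, hpR, zero_mul, neg_zero]
  set d1 : Derivation k R R := liftDer I δ1 (der_span_vanish δ1 hδ1f) with hd1
  set d2 : Derivation k R R := liftDer I δ2 (der_span_vanish δ2 hδ2f) with hd2
  have hd1x : d1 x = x := by rw [hx, hd1, hπ, liftDer_mk, hδ1X0]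
  have hd1y : d1 y = -y := by rw [hy, hd1, hπ, liftDer_mk, hδ1X1]
  have hd1z : d1 z = 0 := by rw [hz, hd1, hπ, liftDer_mk, hδ1X2]
  have hd2x : d2 x = 0 := by rw [hx, hd2, hπ, liftDer_mk, hδ2X0]
  have hd2y : d2 y = 0 := by rw [hy, hd2, hπ, liftDer_mk, hδ2X1]
  have hd2z : d2 z = 1 := by rw [hz, hd2, hπ, liftDer_mk, hδ2X2]
  -- the key division lemma
  have hL2 : ∀ a : R, x ∣ a * y → ∃ lam : R, a = lam * x := by
    intro a hdvd
    obtain ⟨c, hc⟩ := hdvd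
    obtain ⟨g, rfl⟩ := Ideal.Quotient.mk_surjective (I := I) a
    obtain ⟨h, rfl⟩ := Ideal.Quotient.mk_surjective (I := I) c
    have hmem : f ∣ g * X 1 - X 0 * h := by
      rw [← Ideal.mem_span_singleton, ← hI, ← Ideal.Quotient.eq_zero_iff_mem, map_sub, map_mul,
        map_mul, sub_eq_zero]
      exact hc
    obtain ⟨q, hq⟩ := hmem
    have hψ : psi0 g * X 1 = - (X 2 ^ p * psi0 q) := by
      have := congrArg (psi0 (k := k)) hq
      rw [map_sub, map_mul, map_mul, psi0_X0, psi0_X1, zero_mul, sub_zero, map_mul] at this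
      rw [this, hf, map_sub, map_mul, map_pow, psi0_X0, psi0_X1, psi0_X2, zero_mul, zero_sub]
      ring
    have hdvd3 : (X 2 : MvPolynomial (Fin 3) k) ^ p ∣ psi0 g := by
      exact (mv_prime_X (2 : Fin 3)).pow_dvd_of_dvd_mul_right p
        (mv_not_dvd_X (by decide : (2 : Fin 3) ≠ 1)) ⟨-psi0 q, by rw [hψ]; ring⟩
    obtain ⟨w, hw⟩ := hdvd3
    obtain ⟨t, ht⟩ := X0_dvd_sub_psi0 g
    refine ⟨π t + y * π w, ?_⟩
    have hg : g = X 0 * t + X 2 ^ p * w := by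
      have : g = (g - psi0 g) + psi0 g := by ring
      rw [this, ht, hw]
    show π g = _
    rw [hg, map_add, map_mul, map_mul, map_pow]
    show x * π t + z ^ p * π w = _
    rw [← hxyz]
    ring
  -- the structure theorem for a derivation D
  have hadjoin : Algebra.adjoin k (Set.range fun i : Fin 3 => π (X i)) = ⊤ := by
    have h1 : (Set.range fun i : Fin 3 => π (X i)) =
        (Ideal.Quotient.mkₐ k I) '' Set.range (X : Fin 3 → MvPolynomial (Fin 3) k) := by
      rw [← Set.range_comp]
      rfl
    rw [h1, ← AlgHom.map_adjoin, adjoin_range_X, Algebra.map_top]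
    rw [AlgHom.range_eq_top]
    exact Ideal.Quotient.mkₐ_surjective k I
  have hdecomp : ∀ D : Derivation k R R, ∃ lam : R, D = lam • d1 + D z • d2 := by
    intro D
    have hrel : x * D y + y * D x = 0 := by
      have h1 : D (x * y) = x * D y + y * D x := by
        rw [Derivation.leibniz, smul_eq_mul, smul_eq_mul]
      have h2 : D (z ^ p) = 0 := by
        rw [Derivation.leibniz_pow, nsmul_eq_mul, hpR, zero_mul]
      rw [← hxyz] at h2
      rw [← h1, h2]
    obtain ⟨lam, hlam⟩ := hL2 (D x) ⟨-(D y), by linear_combination hrel⟩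
    have hDy : D y = -(lam * y) := by
      have hzero : x * (D y + lam * y) = 0 := by
        rw [hlam] at hrel
        linear_combination hrel
      rcases mul_eq_zero.mp hzero with h | h
      · exact absurd h hx0
      · linear_combination h
    refine ⟨lam, ?_⟩
    apply Derivation.ext_of_adjoin_eq_top _ hadjoin
    rintro v ⟨i, rfl⟩
    fin_cases i
    · show D x = (lam • d1 + D z • d2) x
      rw [Derivation.add_apply, Derivation.smul_apply, Derivation.smul_apply, hd1x, hd2x,
        smul_eq_mul, smul_eq_mul, mul_zero, add_zero, hlam, mul_comm]
    · show D y = (lam • d1 + D z • d2) y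
      rw [Derivation.add_apply, Derivation.smul_apply, Derivation.smul_apply, hd1y, hd2y,
        smul_eq_mul, smul_eq_mul, mul_zero, add_zero, hDy]
      ring
    · show D z = (lam • d1 + D z • d2) z
      rw [Derivation.add_apply, Derivation.smul_apply, Derivation.smul_apply, hd1z, hd2z,
        smul_eq_mul, smul_eq_mul, mul_zero, zero_add, mul_one]
  have hli : LinearIndependent R ![d1, d2] := by
    refine (Fintype.linearIndependent_iff (M := Derivation k R R) (R := R)).mpr ?_
    intro g hg
    rw [Fin.sum_univ_two] at hg
    simp only [Matrix.cons_val_zero, Matrix.cons_val_one, Matrix.head_cons] at hg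
    have hgx := Derivation.congr_fun hg x
    rw [Derivation.add_apply, Derivation.smul_apply, Derivation.smul_apply, hd1x, hd2x,
      smul_eq_mul, smul_eq_mul, mul_zero, add_zero, Derivation.zero_apply] at hgx
    have hg0 : g 0 = 0 := by
      rcases mul_eq_zero.mp hgx with h | h
      · exact h
      · exact absurd h hx0
    have hgz := Derivation.congr_fun hg z
    rw [Derivation.add_apply, Derivation.smul_apply, Derivation.smul_apply, hd1z, hd2z,
      smul_eq_mul, smul_eq_mul, mul_zero, zero_add, mul_one, Derivation.zero_apply] at hgz
    have hg1 : g 1 = 0 := hgz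
    intro i
    fin_cases i
    · exact hg0
    · exact hg1
  have hsp : ⊤ ≤ Submodule.span R (Set.range ![d1, d2]) := by
    intro D _
    obtain ⟨lam, hD⟩ := hdecomp D
    rw [hD]
    refine Submodule.add_mem _ (Submodule.smul_mem _ _ ?_) (Submodule.smul_mem _ _ ?_)
    · exact Submodule.subset_span ⟨0, rfl⟩
    · exact Submodule.subset_span ⟨1, rfl⟩
  refine ⟨Module.Basis.mk hli hsp, ?_, ?_, ?_, ?_, ?_, ?_⟩ <;>
    rw [Module.Basis.mk_apply]
  · exact hd1x
  · exact hd1y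
  · exact hd1z
  · exact hd2x
  · exact hd2y
  · exact hd2z
end

section
/- Let R = C{x,y,z}/(f) (or any commutative ring containing elements x,y,z,f_x,f_y,f_z with f = x f_x + y f_y + z f_z). Define the 4×4 matrices C = [[0, f_z, -f_y, x],[-f_z, 0, f_x, y],[f_y, -f_x, 0, z],[-x, -y, -z, 0]] and D = [[0, -z, y, -f_x],[z, 0, -x, -f_y],[-y, x, 0, -f_z],[f_x, f_y, f_z, 0]]. Then C·D = D·C = f·Id_4, i.e., (C,D) is a matrix factorization of f. -/
/-! In block form `C = [[A, u], [-uᵀ, 0]]` and `D = [[B, -g], [gᵀ, 0]]` with `u = (x, y, z)`,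
`g = (fx, fy, fz)`, `A v = v × g` and `B v = u × v`. The off-diagonal blocks of both products
vanish because `u × u = g × g = 0`, the corner entries are `u ⬝ g = f`, and the remaining blocks
are `v ↦ (u × v) × g + (g ⬝ v) u` and `v ↦ u × (v × g) + (u ⬝ v) g`, both equal to `(u ⬝ g) v`
by the expansion of the vector triple product. -/

/-- If `f = x*fx + y*fy + z*fz` in a commutative ring `R`, then the pair of
4×4 matrices `(C, D)` below is a matrix factorization of `f`: `C·D = D·C = f·Id₄`. -/
theorem stmt_3 {R : Type*} [CommRing R] (x y z fx fy fz f : R)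
    (hf : f = x * fx + y * fy + z * fz) :
    let C : Matrix (Fin 4) (Fin 4) R :=
      !![0, fz, -fy, x; -fz, 0, fx, y; fy, -fx, 0, z; -x, -y, -z, 0]
    let D : Matrix (Fin 4) (Fin 4) R :=
      !![0, -z, y, -fx; z, 0, -x, -fy; -y, x, 0, -fz; fx, fy, fz, 0]
    C * D = f • (1 : Matrix (Fin 4) (Fin 4) R) ∧
      D * C = f • (1 : Matrix (Fin 4) (Fin 4) R) := by
  intro C D
  subst hf
  constructor <;>
  · ext i j
    fin_cases i <;> fin_cases j <;>
      simp [C, D, Matrix.mul_apply, Fin.sum_univ_four] <;> ring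
end

section
/- Let R be a Noetherian commutative ring and M a finitely generated R-module. Then the dual module M* = Hom_R(M,R) is reflexive, i.e., the natural map M* → (M*)** is an isomorphism, provided R is an integrally closed Noetherian domain. -/
/-!
Evaluation at generators `m₁, …, mₙ` of `M` is a finite family of functionals separating the
points of `M*`. Cutting `M*` down by the kernel of one of them at a time shows that every
functional on `M*` is, after multiplication by a nonzero scalar, a combination of these
evaluations; that is, `M** / M` is torsion. Since `R` is a domain, a functional on `M**` is then
determined by its restriction to `M`, so restriction `M*** → M*` is injective. It is a left inverse
of the evaluation `M* → M***`, which is therefore bijective.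
-/

open Module LinearMap

section CommRing

variable {R P : Type*} [CommRing R] [AddCommGroup P] [Module R P]

theorem Module.Dual.exists_smul_eq_smul_add_smul_of_eqOn_ker [Nontrivial R] {y h π : Dual R P}
    (hyh : ∀ p ∈ ker π, y p = h p) : ∃ s ≠ (0 : R), ∃ c : R, s • y = s • h + c • π := by
  by_cases hπ : π = 0
  · refine ⟨1, one_ne_zero, 0, ?_⟩
    ext p
    simpa using hyh p (by simp [hπ])
  · obtain ⟨w, hw⟩ : ∃ w, π w ≠ 0 := by
      by_contra! h
      exact hπ (LinearMap.ext h)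
    refine ⟨π w, hw, y w - h w, LinearMap.ext fun p => ?_⟩
    -- `π w • p - π p • w` lies in `ker π` for every `p`.
    have key := hyh (π w • p - π p • w) (by simp [mul_comm])
    simp only [map_sub, map_smul, smul_eq_mul] at key
    simp only [LinearMap.add_apply, LinearMap.smul_apply, smul_eq_mul]
    linear_combination key

end CommRing

theorem Module.Dual.exists_smul_mem_span_of_separating {R P : Type*} [CommRing R] [IsDomain R]
    [AddCommGroup P] [Module R P] {n : ℕ} (f : Fin n → Dual R P)
    (hf : ∀ p, (∀ i, f i p = 0) → p = 0) (x : Dual R P) :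
    ∃ r ≠ (0 : R), r • x ∈ Submodule.span R (Set.range f) := by
  induction n generalizing P with
  | zero =>
    have hx : x = 0 := LinearMap.ext fun p => by simp [hf p finZeroElim]
    exact ⟨1, one_ne_zero, by simp [hx]⟩
  | succ n ih =>
    set K := ker (f (Fin.last n))
    obtain ⟨r, hr, hrx⟩ := ih (fun i => K.subtype.dualMap (f i.castSucc))
      (fun p hp => Subtype.ext <| hf p <| Fin.lastCases p.2 hp) (K.subtype.dualMap x)
    rw [Set.range_comp' K.subtype.dualMap, Submodule.span_image, ← map_smul] at hrx
    obtain ⟨h, hh, hhx⟩ := hrx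
    obtain ⟨s, hs, c, hsc⟩ := Dual.exists_smul_eq_smul_add_smul_of_eqOn_ker (y := r • x) (h := h)
      (π := f (Fin.last n)) fun p hp => (LinearMap.congr_fun hhx ⟨p, hp⟩).symm
    refine ⟨s * r, mul_ne_zero hs hr, ?_⟩
    rw [mul_smul, hsc]
    refine Submodule.add_mem _ (Submodule.smul_mem _ _ ?_)
      (Submodule.smul_mem _ _ (Submodule.subset_span ⟨_, rfl⟩))
    exact Submodule.span_mono (Set.range_comp_subset_range _ _) hh

theorem LinearMap.dualMap_injective_of_exists_smul_mem_range {R M N : Type*} [CommRing R]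
    [NoZeroDivisors R] [AddCommMonoid M] [AddCommMonoid N] [Module R M] [Module R N]
    (f : M →ₗ[R] N) (hf : ∀ y, ∃ r ≠ (0 : R), r • y ∈ range f) :
    Function.Injective f.dualMap := by
  refine (injective_iff_map_eq_zero _).mpr fun φ hφ => LinearMap.ext fun y => ?_
  obtain ⟨r, hr, m, hm⟩ := hf y
  have hry : r * φ y = 0 := by
    rw [← smul_eq_mul, ← map_smul, ← hm]
    exact LinearMap.congr_fun hφ m
  exact (mul_eq_zero.mp hry).resolve_left hr

section CommSemiring

variable (R M : Type*) [CommSemiring R] [AddCommMonoid M] [Module R M]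

theorem Module.Dual.eval_dualMap_comp_eval_dual :
    (Dual.eval R M).dualMap ∘ₗ Dual.eval R (Dual R M) = LinearMap.id :=
  rfl

theorem Module.Dual.bijective_eval_dual_of_injective_eval_dualMap
    (h : Function.Injective (Dual.eval R M).dualMap) :
    Function.Bijective (Dual.eval R (Dual R M)) := by
  have hleft : Function.LeftInverse (Dual.eval R M).dualMap (Dual.eval R (Dual R M)) :=
    LinearMap.congr_fun (Dual.eval_dualMap_comp_eval_dual R M)
  exact ⟨hleft.injective, fun z => ⟨(Dual.eval R M).dualMap z, h (hleft _)⟩⟩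

end CommSemiring

theorem Module.Dual.exists_smul_mem_range_eval {R M : Type*} [CommRing R] [IsDomain R]
    [AddCommGroup M] [Module R M] [Module.Finite R M] (x : Dual R (Dual R M)) :
    ∃ r ≠ (0 : R), r • x ∈ range (Dual.eval R M) := by
  obtain ⟨n, g, hg⟩ := Module.Finite.exists_fin (R := R) (M := M)
  have hsep : ∀ φ : Dual R M, (∀ i, Dual.eval R M (g i) φ = 0) → φ = 0 := fun φ hφ =>
    LinearMap.ext_on hg (by rintro _ ⟨i, rfl⟩; exact hφ i)
  obtain ⟨r, hr, hrx⟩ := Dual.exists_smul_mem_span_of_separating _ hsep x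
  refine ⟨r, hr, ?_⟩
  rwa [Set.range_comp', Submodule.span_image, hg, Submodule.map_top] at hrx

theorem stmt_12_general {R : Type*} [CommRing R] [IsDomain R]
    (M : Type*) [AddCommGroup M] [Module R M] [Module.Finite R M] :
    Function.Bijective (Module.Dual.eval R (Module.Dual R M)) :=
  Dual.bijective_eval_dual_of_injective_eval_dualMap R M <|
    (Dual.eval R M).dualMap_injective_of_exists_smul_mem_range Dual.exists_smul_mem_range_eval

/-- If R is an integrally closed Noetherian domain and M a finitely
generated R-module, then the dual M* = Hom_R(M,R) is reflexive: the natural evaluation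
map M* → (M*)** is an isomorphism (i.e. bijective). -/
theorem stmt_12 {R : Type*} [CommRing R] [IsDomain R] [IsNoetherianRing R]
    [IsIntegrallyClosed R]
    (M : Type*) [AddCommGroup M] [Module R M] [Module.Finite R M] :
    Function.Bijective (Module.Dual.eval R (Module.Dual R M)) :=
  stmt_12_general M
end
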